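/- Let 𝒢 ⇉ M be a Lie groupoid, E a representation, and ω ∈ Ω¹(𝒢, t*E) a multiplicative form of constant rank. Then ω is s-transversal, i.e. ker(ω_g) + ker(d_gs) = T_g𝒢 for every g ∈ 𝒢, and also t-transversal, i.e. ker(ω_g) + ker(d_gt) = T_g𝒢 for every g ∈ 𝒢. -/
import Mathlib


/-!
STATEMENT 9: A multiplicative 1-form ω ∈ Ω¹(𝒢, t*E) of constant rank on a Lie groupoid
𝒢 ⇉ M is s-transversal (ker ω_g + ker d_gs = T_g𝒢 for all g) and t-transversal
(ker ω_g + ker d_gt = T_g𝒢 for all g).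

Pointwise-linearized formalization with fixed tangent models.  Besides multiplicativity
and constant rank, the hypotheses record the standard structure of a Lie groupoid and
the chain rules used in the proof: the unit laws and their differentials, the inversion
map with its differential (a pointwise isomorphism, with s∘i = t, t∘i = s, g·g⁻¹ = 1 and
their differentials), functoriality of the representation, and the differentials of
source/target along the multiplication.
-/

open Module

theorem stmt_9
    (Obj Arr : Type)
    (s t : Arr → Obj) (unit : Obj → Arr) (inv : Arr → Arr)
    (comp : ∀ g h : Arr, s g = t h → Arr)
    (VA VO VE : Type)
    [AddCommGroup VA] [Module ℝ VA] [AddCommGroup VO] [Module ℝ VO]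
    [AddCommGroup VE] [Module ℝ VE]
    [FiniteDimensional ℝ VA] [FiniteDimensional ℝ VO] [FiniteDimensional ℝ VE]
    (ds dt : Arr → (VA →ₗ[ℝ] VO))
    (du : Obj → (VO →ₗ[ℝ] VA))
    (di : Arr → (VA →ₗ[ℝ] VA))
    (dcomp : ∀ (g h : Arr) (_ : s g = t h) (v w : VA), ds g v = dt h w → VA)
    (act : Arr → (VE →ₗ[ℝ] VE))
    (ω : Arr → (VA →ₗ[ℝ] VE))
    -- ω is multiplicative
    (hmult : ∀ (g h : Arr) (c : s g = t h) (v w : VA) (hc : ds g v = dt h w),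
      ω (comp g h c) (dcomp g h c v w hc) = ω g v + act g (ω h w))
    -- ω is of constant rank
    (hrank : ∀ g₁ g₂ : Arr,
      finrank ℝ (LinearMap.range (ω g₁)) = finrank ℝ (LinearMap.range (ω g₂)))
    -- groupoid structure maps and their differentials
    (hs_unit : ∀ x, s (unit x) = x) (ht_unit : ∀ x, t (unit x) = x)
    (hs_comp : ∀ g h c, s (comp g h c) = s h) (ht_comp : ∀ g h c, t (comp g h c) = t g)
    (hs_inv : ∀ g, s (inv g) = t g) (ht_inv : ∀ g, t (inv g) = s g)
    (hcomp_unit : ∀ (x : Obj) (c : s (unit x) = t (unit x)), comp (unit x) (unit x) c = unit x)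
    (hunit_comp : ∀ (g : Arr) (c : s (unit (t g)) = t g), comp (unit (t g)) g c = g)
    (hcomp_inv : ∀ (g : Arr) (c : s g = t (inv g)), comp g (inv g) c = unit (t g))
    (hinv_comp : ∀ (g : Arr) (c : s (inv g) = t g), comp (inv g) g c = unit (s g))
    (hds_du : ∀ x v, ds (unit x) (du x v) = v)
    (hdt_du : ∀ x v, dt (unit x) (du x v) = v)
    (hdcomp_unit : ∀ (x : Obj) (v : VO) (c : s (unit x) = t (unit x))
        (hc : ds (unit x) (du x v) = dt (unit x) (du x v)),
      dcomp (unit x) (unit x) c (du x v) (du x v) hc = du x v)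
    (hds_dcomp : ∀ g h c v w hc, ds (comp g h c) (dcomp g h c v w hc) = ds h w)
    (hdt_dcomp : ∀ g h c v w hc, dt (comp g h c) (dcomp g h c v w hc) = dt g v)
    (hds_di : ∀ g v, ds (inv g) (di g v) = dt g v)
    (hdt_di : ∀ g v, dt (inv g) (di g v) = ds g v)
    (hdi_bij : ∀ g, Function.Bijective (di g))
    (hdcomp_inv : ∀ (g : Arr) (c : s g = t (inv g)) (v : VA)
        (hc : ds g v = dt (inv g) (di g v)),
      dcomp g (inv g) c v (di g v) hc = du (t g) (dt g v))
    -- the coefficients form a representation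
    (hact_unit : ∀ x, act (unit x) = LinearMap.id)
    (hact_comp : ∀ g h c, act (comp g h c) = (act g).comp (act h))
    (hact_bij : ∀ g, Function.Bijective (act g)) :
    ∀ g : Arr,
      (LinearMap.ker (ω g) ⊔ LinearMap.ker (ds g) = (⊤ : Submodule ℝ VA))
      ∧ (LinearMap.ker (ω g) ⊔ LinearMap.ker (dt g) = (⊤ : Submodule ℝ VA)) := by

  -- (A) ω vanishes on unit directions
  have hA : ∀ x v, ω (unit x) (du x v) = 0 := by
    intro x v
    have c : s (unit x) = t (unit x) := (hs_unit x).trans (ht_unit x).symm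
    have hc : ds (unit x) (du x v) = dt (unit x) (du x v) := by rw [hds_du, hdt_du]
    have E := hmult (unit x) (unit x) c (du x v) (du x v) hc
    rw [hcomp_unit x c, hdcomp_unit x v c hc, hact_unit x] at E
    simp only [LinearMap.id_coe, id_eq] at E
    have h2 : ω (unit x) (du x v) + 0 = ω (unit x) (du x v) + ω (unit x) (du x v) := by
      rw [add_zero]; exact E
    exact (add_left_cancel h2).symm
  -- (B) inversion identity
  have hB : ∀ (g : Arr) (v : VA), ω g v + act g (ω (inv g) (di g v)) = 0 := by
    intro g v
    have c : s g = t (inv g) := (ht_inv g).symm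
    have hc : ds g v = dt (inv g) (di g v) := (hdt_di g v).symm
    have E := hmult g (inv g) c v (di g v) hc
    rw [hcomp_inv g c, hdcomp_inv g c v hc, hA (t g) (dt g v)] at E
    exact E.symm
  -- s-transversality at every arrow
  have keyS : ∀ g : Arr, LinearMap.ker (ω g) ⊔ LinearMap.ker (ds g) = (⊤ : Submodule ℝ VA) := by
    intro g
    have c : s (unit (t g)) = t g := hs_unit (t g)
    -- right-translation of kernel directions: realize every value of ω at the unit
    -- on ker (ds g)
    have htrans : ∀ z' : VA, ∃ η : VA, ds g η = 0 ∧ ω g η = ω (unit (t g)) z' := by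
      intro z'
      have hc : ds (unit (t g)) (z' - du (t g) (ds (unit (t g)) z')) = dt g 0 := by
        simp [map_sub, hds_du]
      refine ⟨dcomp (unit (t g)) g c (z' - du (t g) (ds (unit (t g)) z')) 0 hc, ?_, ?_⟩
      · have E2 := hds_dcomp (unit (t g)) g c (z' - du (t g) (ds (unit (t g)) z')) 0 hc
        rw [hunit_comp g c] at E2
        simpa using E2
      · have E := hmult (unit (t g)) g c (z' - du (t g) (ds (unit (t g)) z')) 0 hc
        rw [hunit_comp g c, hact_unit (t g)] at E
        simpa [map_sub, hA] using E
    -- dimension count: ω g (ker ds g) = range (ω g)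
    have h1 : LinearMap.range (ω (unit (t g))) ≤
        Submodule.map (ω g) (LinearMap.ker (ds g)) := by
      rintro e ⟨z', rfl⟩
      obtain ⟨η, hη1, hη2⟩ := htrans z'
      exact ⟨η, LinearMap.mem_ker.mpr hη1, hη2⟩
    have hS : Submodule.map (ω g) (LinearMap.ker (ds g)) = LinearMap.range (ω g) := by
      apply Submodule.eq_of_le_of_finrank_le
      · rintro e ⟨η, -, rfl⟩
        exact LinearMap.mem_range_self _ η
      · calc finrank ℝ (LinearMap.range (ω g))
            = finrank ℝ (LinearMap.range (ω (unit (t g)))) := hrank g (unit (t g))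
          _ ≤ finrank ℝ (Submodule.map (ω g) (LinearMap.ker (ds g))) :=
              Submodule.finrank_mono h1
    rw [eq_top_iff]
    rintro v -
    have hv : ω g v ∈ Submodule.map (ω g) (LinearMap.ker (ds g)) :=
      hS ▸ LinearMap.mem_range_self _ v
    obtain ⟨b, hb, hωb⟩ := hv
    have hvb : v = (v - b) + b := by abel
    rw [hvb]
    refine Submodule.add_mem _ (Submodule.mem_sup_left ?_) (Submodule.mem_sup_right hb)
    simp [LinearMap.mem_ker, map_sub, hωb]
  intro g
  refine ⟨keyS g, ?_⟩
  -- t-transversality via the inversion isomorphism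
  rw [eq_top_iff]
  rintro v -
  have hv : di g v ∈ LinearMap.ker (ω (inv g)) ⊔ LinearMap.ker (ds (inv g)) := by
    rw [keyS (inv g)]; trivial
  obtain ⟨a', ha', b', hb', hab⟩ := Submodule.mem_sup.mp hv
  obtain ⟨a, rfl⟩ := (hdi_bij g).2 a'
  obtain ⟨b, rfl⟩ := (hdi_bij g).2 b'
  have hvab : v = a + b := by
    apply (hdi_bij g).1
    rw [map_add]; exact hab.symm
  have ha : a ∈ LinearMap.ker (ω g) := by
    have := hB g a
    rw [LinearMap.mem_ker.mp ha', map_zero, add_zero] at this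
    exact LinearMap.mem_ker.mpr this
  have hb : b ∈ LinearMap.ker (dt g) := by
    have := hds_di g b
    rw [LinearMap.mem_ker.mp hb'] at this
    exact LinearMap.mem_ker.mpr this.symm
  rw [hvab]
  exact Submodule.add_mem _ (Submodule.mem_sup_left ha) (Submodule.mem_sup_right hb)
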